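/- (Entropic smoothing of the adversarial problem adds entropic regularization to the primal.) Let n ∈ ℕ, μ, ν ∈ ℝⁿ histograms with strictly positive entries, η ≥ 0, and F : ℝ^{n×n} → ℝ ∪ {+∞} proper, convex, lower semicontinuous, with F(π₀) < +∞ for some π₀ ∈ Π(μ,ν). Define the entropy-regularized OT value S^η_c(μ,ν) = min_{π∈Π(μ,ν)} [ ⟨c,π⟩ + η Σ_{ij} π_{ij}(log π_{ij} − 1) ] (with 0·(log 0 − 1) = 0). Then sup_{c ∈ ℝ^{n×n}} [ S^η_c(μ,ν) − F*(c) ] = min_{π∈Π(μ,ν)} [ F(π) + η Σ_{ij} π_{ij}(log π_{ij} − 1) ]. -/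

import Mathlib

open scoped BigOperators

/-- `μ` is a histogram: nonnegative entries summing to `1`. -/
def IsHistogram {n : ℕ} (μ : Fin n → ℝ) : Prop := (∀ i, 0 ≤ μ i) ∧ ∑ i, μ i = 1

/-- The transportation polytope `Π(μ,ν)`: matrices with nonnegative entries,
row sums `μ` and column sums `ν`. -/
def DCouplings {n : ℕ} (μ ν : Fin n → ℝ) : Set (Fin n → Fin n → ℝ) :=
  {π | (∀ i j, 0 ≤ π i j) ∧ (∀ i, ∑ j, π i j = μ i) ∧ (∀ j, ∑ i, π i j = ν j)}

/-- Frobenius inner product `⟨c, π⟩`. -/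
def frob {n : ℕ} (c π : Fin n → Fin n → ℝ) : ℝ := ∑ i, ∑ j, c i j * π i j

/-- Discrete optimal transport cost `OT_c(μ,ν)`. -/
noncomputable def dOT {n : ℕ} (c : Fin n → Fin n → ℝ) (μ ν : Fin n → ℝ) : ℝ :=
  ⨅ π : DCouplings μ ν, frob c π.1

/-- Convex conjugate of `G : ℝ^{n×n} → ℝ ∪ {+∞}`. -/
noncomputable def dconj {n : ℕ} (G : (Fin n → Fin n → ℝ) → EReal)
    (c : Fin n → Fin n → ℝ) : EReal :=
  ⨆ π : Fin n → Fin n → ℝ, ((frob c π : ℝ) : EReal) - G π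

/-- The (negative) entropy `Σ_{ij} π_{ij} (log π_{ij} − 1)`; note that in Lean
`Real.log 0 = 0`, so the convention `0·(log 0 − 1) = 0` holds automatically. -/
noncomputable def negEntropy {n : ℕ} (π : Fin n → Fin n → ℝ) : ℝ :=
  ∑ i, ∑ j, π i j * (Real.log (π i j) - 1)

/-- The entropy-regularized OT value `S^η_c(μ,ν)`. -/
noncomputable def sinkhorn {n : ℕ} (η : ℝ) (c : Fin n → Fin n → ℝ) (μ ν : Fin n → ℝ) : ℝ :=
  ⨅ π : DCouplings μ ν, (frob c π.1 + η * negEntropy π.1)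

/-! Weak duality is the Fenchel–Young inequality `⟨c, π⟩ - F π ≤ F* c`. Conversely, let `m` be
below the primal value. The compact convex set of `(π, t)` with `π ∈ Π(μ,ν)` and
`t ≤ m - η H(π)` (truncated below) is disjoint from the closed convex epigraph of `F`, so
Hahn–Banach separates them by a hyperplane; it is not vertical because `F` is finite at a
point of `Π(μ,ν)`. Its slope `c` is a cost with `S^η_c(μ,ν) - F*(c) ≥ m`. -/

open Set

def slabBelowGraph {E : Type*} (K : Set E) (g : E → ℝ) (a m : ℝ) : Set (E × ℝ) :=
  {p | p.1 ∈ K ∧ a ≤ p.2 ∧ p.2 + g p.1 ≤ m}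

lemma convex_slabBelowGraph {E : Type*} [AddCommGroup E] [Module ℝ E] {K : Set E} {g : E → ℝ}
    (hg : ConvexOn ℝ K g) (a m : ℝ) : Convex ℝ (slabBelowGraph K g a m) := by
  rintro ⟨x, t⟩ ⟨hx, hat, htm⟩ ⟨y, s⟩ ⟨hy, has, hsm⟩ α β hα hβ hαβ
  have hgxy := hg.2 hx hy hα hβ hαβ
  simp only [smul_eq_mul] at hgxy hat htm has hsm
  refine ⟨hg.1 hx hy hα hβ hαβ, ?_, ?_⟩ <;> simp only [Prod.smul_mk, Prod.mk_add_mk, smul_eq_mul]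
  · linear_combination α * hat + β * has - a * hαβ
  · linear_combination α * htm + β * hsm + hgxy + m * hαβ

lemma isCompact_slabBelowGraph {E : Type*} [TopologicalSpace E] {K : Set E} {g : E → ℝ}
    (hK : IsCompact K) (hg : ContinuousOn g K) (a m : ℝ) :
    IsCompact (slabBelowGraph K g a m) := by
  obtain ⟨C, hC⟩ := hK.exists_bound_of_continuousOn hg
  have hcont : ContinuousOn (fun p : E × ℝ => p.2 + g p.1) (K ×ˢ Icc a (m + C)) :=
    continuousOn_snd.add (hg.comp continuousOn_fst fun p hp => hp.1)
  convert hcont.lowerSemicontinuousOn.isCompact_inter_preimage_Iic (hK.prod isCompact_Icc) m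
    using 1
  ext ⟨x, t⟩
  simp only [slabBelowGraph, mem_inter_iff, mem_prod, mem_Icc, mem_preimage, mem_Iic,
    mem_ofPred_eq]
  constructor
  · rintro ⟨hx, hat, htm⟩
    have := neg_le_of_abs_le (hC x hx)
    exact ⟨⟨hx, hat, by linarith⟩, htm⟩
  · rintro ⟨⟨hx, hat, -⟩, htm⟩
    exact ⟨hx, hat, htm⟩

lemma convex_epigraph_of_convex {E : Type*} [AddCommGroup E] [Module ℝ E] {F : E → EReal}
    (hconv : ∀ x y : E, ∀ a b : ℝ, 0 ≤ a → 0 ≤ b → a + b = 1 →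
      F (a • x + b • y) ≤ (a : EReal) * F x + (b : EReal) * F y) :
    Convex ℝ {p : E × ℝ | F p.1 ≤ p.2} := by
  rintro ⟨x, t⟩ hxt ⟨y, s⟩ hys a b ha hb hab
  calc F (a • x + b • y) ≤ (a : EReal) * F x + (b : EReal) * F y := hconv x y a b ha hb hab
    _ ≤ (a : EReal) * t + (b : EReal) * s :=
      add_le_add (mul_le_mul_of_nonneg_left hxt (EReal.coe_nonneg.2 ha))
        (mul_le_mul_of_nonneg_left hys (EReal.coe_nonneg.2 hb))
    _ = ((a • (x, t) + b • (y, s)).2 : ℝ) := by simp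

lemma isClosed_epigraph_of_lowerSemicontinuous {E : Type*} [TopologicalSpace E] {F : E → EReal}
    (hlsc : LowerSemicontinuous F) : IsClosed {p : E × ℝ | F p.1 ≤ p.2} :=
  hlsc.isClosed_epigraph.preimage
    (continuous_fst.prodMk (continuous_coe_real_ereal.comp continuous_snd))

lemma ContinuousLinearMap.apply_prod_real {E : Type*} [AddCommGroup E] [Module ℝ E]
    [TopologicalSpace E] (f : E × ℝ →L[ℝ] ℝ) (x : E) (t : ℝ) :
    f (x, t) = f (x, 0) + t * f (0, 1) := by
  rw [← smul_eq_mul, ← map_smul, ← map_add, Prod.smul_mk, smul_zero, smul_eq_mul, mul_one,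
    Prod.mk_add_mk, add_zero, zero_add]

theorem exists_affine_sandwich_of_lt_add {E : Type*} [AddCommGroup E] [Module ℝ E]
    [TopologicalSpace E] [IsTopologicalAddGroup E] [ContinuousSMul ℝ E] [LocallyConvexSpace ℝ E]
    {F : E → EReal}
    (hconv : ∀ x y : E, ∀ a b : ℝ, 0 ≤ a → 0 ≤ b → a + b = 1 →
      F (a • x + b • y) ≤ (a : EReal) * F x + (b : EReal) * F y)
    (hlsc : LowerSemicontinuous F) {K : Set E} (hK : IsCompact K) {g : E → ℝ}
    (hg : ConvexOn ℝ K g) (hgc : ContinuousOn g K) {x₀ : E} (hx₀ : x₀ ∈ K) (hFx₀ : F x₀ ≠ ⊤)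
    {m : ℝ} (hm : ∀ x ∈ K, (m : EReal) < F x + g x) :
    ∃ (ℓ : E →L[ℝ] ℝ) (s : ℝ), (∀ x ∈ K, m + s ≤ ℓ x + g x) ∧
      ∀ y, ((ℓ y - s : ℝ) : EReal) ≤ F y := by
  obtain ⟨C, hC⟩ := hK.exists_bound_of_continuousOn hgc
  have hgraph : ∀ x ∈ K, (x, m - g x) ∈ slabBelowGraph K g (m - C) m := fun x hx =>
    ⟨hx, by linarith [le_of_abs_le (hC x hx)], by simp⟩
  have hdisj : Disjoint (slabBelowGraph K g (m - C) m) {p : E × ℝ | F p.1 ≤ p.2} := by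
    refine Set.disjoint_left.2 ?_
    rintro ⟨x, t⟩ ⟨hx, -, htm⟩ (hFt : F x ≤ t)
    refine (hm x hx).not_ge ?_
    calc F x + g x ≤ (t : EReal) + g x := add_le_add hFt le_rfl
      _ ≤ m := mod_cast htm
  obtain ⟨f, u, v, hfB, huv, hfA⟩ := geometric_hahn_banach_compact_closed
    (convex_slabBelowGraph hg _ _) (isCompact_slabBelowGraph hK hgc _ _)
    (convex_epigraph_of_convex hconv) (isClosed_epigraph_of_lowerSemicontinuous hlsc) hdisj
  set β := f (0, 1)
  have hB : ∀ x ∈ K, f (x, 0) + (m - g x) * β < u := fun x hx =>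
    f.apply_prod_real x _ ▸ hfB _ (hgraph x hx)
  have hA : ∀ y (r : ℝ), F y ≤ r → v < f (y, 0) + r * β := fun y r hr =>
    f.apply_prod_real y r ▸ hfA (y, r) hr
  -- the hyperplane is not vertical, as it separates `(x₀, m - g x₀)` from `(x₀, r)` for `r ≫ 0`
  have hβ : 0 < β := by
    by_contra! hβ
    set r := max (F x₀).toReal (m - g x₀)
    have := hA x₀ r ((EReal.le_coe_toReal hFx₀).trans (mod_cast le_max_left _ _))
    nlinarith [hB x₀ hx₀, mul_le_mul_of_nonpos_right (le_max_right (F x₀).toReal (m - g x₀)) hβ]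
  refine ⟨-β⁻¹ • f.comp (.inl ℝ E ℝ), -u / β, fun x hx => ?_, fun y => ?_⟩
  · have := hB x hx
    simp only [FunLike.coe_smul, Pi.smul_apply, ContinuousLinearMap.comp_apply,
      ContinuousLinearMap.inl_apply, smul_eq_mul]
    field_simp
    linarith
  · refine EReal.le_of_forall_lt_iff_le.1 fun z hz => ?_
    have := hA y z hz.le
    simp only [FunLike.coe_smul, Pi.smul_apply, ContinuousLinearMap.comp_apply,
      ContinuousLinearMap.inl_apply, smul_eq_mul]
    norm_cast
    field_simp
    linarith

lemma EReal.coe_add_sub_coe_sub (a b : ℝ) (x : EReal) :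
    ((a + b : ℝ) : EReal) - ((a : EReal) - x) = x + b := by
  induction x using EReal.rec with
  | bot => simp
  | top => simp
  | coe x => norm_cast; ring

section Matrices

variable {n : ℕ}

lemma exists_frob_eq (ℓ : (Fin n → Fin n → ℝ) →ₗ[ℝ] ℝ) : ∃ c, ∀ π, ℓ π = frob c π := by
  classical
  refine ⟨fun i j => ℓ (Pi.single i fun k => if j = k then 1 else 0), fun π => ?_⟩
  conv_lhs => rw [← Finset.univ_sum_single π]
  simp only [frob, map_sum]
  refine Finset.sum_congr rfl fun i _ => ?_
  simpa [mul_comm] using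
    LinearMap.pi_apply_eq_sum_univ (ℓ.comp (LinearMap.single ℝ (fun _ => Fin n → ℝ) i)) (π i)

lemma continuous_frob (c : Fin n → Fin n → ℝ) : Continuous (frob c) := by
  unfold frob; fun_prop

lemma continuous_negEntropy : Continuous (negEntropy (n := n)) := by
  have h : negEntropy = fun π : Fin n → Fin n → ℝ =>
      ∑ i, ∑ j, (π i j * Real.log (π i j) - π i j) := by
    funext π; simp only [negEntropy, mul_sub, mul_one]
  rw [h]
  exact continuous_finsetSum _ fun i _ => continuous_finsetSum _ fun j _ =>
    (Real.continuous_mul_log.comp (by fun_prop)).sub (by fun_prop)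

lemma convexOn_negEntropy : ConvexOn ℝ (Ici 0) (negEntropy (n := n)) := by
  refine ⟨convex_Ici 0, fun π hπ ρ hρ a b ha hb hab => ?_⟩
  simp only [negEntropy, smul_eq_mul, Finset.mul_sum, ← Finset.sum_add_distrib]
  gcongr with i _ j _
  have := Real.convexOn_mul_log.2 (hπ i j) (hρ i j) ha hb hab
  simp only [smul_eq_mul, Pi.add_apply, Pi.smul_apply] at this ⊢
  nlinarith

lemma dCouplings_subset_Icc (μ ν : Fin n → ℝ) : DCouplings μ ν ⊆ Icc 0 fun i _ => μ i :=
  fun _ ⟨hπ, hrow, _⟩ => ⟨fun i j => hπ i j, fun i j =>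
    (Finset.single_le_sum (fun k _ => hπ i k) (Finset.mem_univ j)).trans_eq (hrow i)⟩

lemma isClosed_dCouplings (μ ν : Fin n → ℝ) : IsClosed (DCouplings μ ν) := by
  simp only [DCouplings, ofPred_and, ofPred_forall]
  refine .inter (isClosed_iInter fun i => isClosed_iInter fun j => isClosed_le ?_ ?_)
    (.inter (isClosed_iInter fun i => isClosed_eq ?_ ?_)
      (isClosed_iInter fun j => isClosed_eq ?_ ?_)) <;> fun_prop

lemma isCompact_dCouplings (μ ν : Fin n → ℝ) : IsCompact (DCouplings μ ν) :=
  isCompact_Icc.of_isClosed_subset (isClosed_dCouplings μ ν) (dCouplings_subset_Icc μ ν)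

lemma convex_dCouplings (μ ν : Fin n → ℝ) : Convex ℝ (DCouplings μ ν) := by
  rintro π ⟨hπ, hπr, hπc⟩ ρ ⟨hρ, hρr, hρc⟩ a b ha hb hab
  refine ⟨fun i j => ?_, fun i => ?_, fun j => ?_⟩ <;>
    simp only [Pi.add_apply, Pi.smul_apply, smul_eq_mul, Finset.sum_add_distrib,
      ← Finset.mul_sum, hπr, hπc, hρr, hρc]
  · exact add_nonneg (mul_nonneg ha (hπ i j)) (mul_nonneg hb (hρ i j))
  · rw [← add_mul, hab, one_mul]
  · rw [← add_mul, hab, one_mul]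

lemma sinkhorn_le {η : ℝ} (c : Fin n → Fin n → ℝ) {μ ν : Fin n → ℝ} {π : Fin n → Fin n → ℝ}
    (hπ : π ∈ DCouplings μ ν) : sinkhorn η c μ ν ≤ frob c π + η * negEntropy π := by
  have hcont : Continuous fun π => frob c π + η * negEntropy π :=
    (continuous_frob c).add (continuous_const.mul continuous_negEntropy)
  refine ciInf_le ?_ (⟨π, hπ⟩ : DCouplings μ ν)
  simpa only [image_eq_range] using (isCompact_dCouplings μ ν).bddBelow_image hcont.continuousOn

lemma le_sinkhorn {η a : ℝ} {c : Fin n → Fin n → ℝ} {μ ν : Fin n → ℝ}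
    (hne : (DCouplings μ ν).Nonempty)
    (h : ∀ π ∈ DCouplings μ ν, a ≤ frob c π + η * negEntropy π) : a ≤ sinkhorn η c μ ν :=
  have := hne.to_subtype
  le_ciInf fun π => h π.1 π.2

lemma dconj_le {G : (Fin n → Fin n → ℝ) → EReal} {c : Fin n → Fin n → ℝ} {s : ℝ}
    (h : ∀ π, ((frob c π - s : ℝ) : EReal) ≤ G π) : dconj G c ≤ s :=
  iSup_le fun π => EReal.sub_le_of_le_add' <| calc
    (frob c π : EReal) = ((frob c π - s : ℝ) : EReal) + s := by norm_cast; ring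
    _ ≤ G π + s := add_le_add (h π) le_rfl

lemma sinkhorn_sub_dconj_le {η : ℝ} (c : Fin n → Fin n → ℝ) {μ ν : Fin n → ℝ}
    (F : (Fin n → Fin n → ℝ) → EReal) {π : Fin n → Fin n → ℝ} (hπ : π ∈ DCouplings μ ν) :
    (sinkhorn η c μ ν : EReal) - dconj F c ≤ F π + ((η * negEntropy π : ℝ) : EReal) :=
  calc (sinkhorn η c μ ν : EReal) - dconj F c
      ≤ ((frob c π + η * negEntropy π : ℝ) : EReal) - ((frob c π : EReal) - F π) :=
        EReal.sub_le_sub (mod_cast sinkhorn_le c hπ)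
          (le_iSup (fun π => ((frob c π : ℝ) : EReal) - F π) π)
    _ = F π + ((η * negEntropy π : ℝ) : EReal) := EReal.coe_add_sub_coe_sub _ _ _

end Matrices

theorem stmt19_general {n : ℕ} (μ ν : Fin n → ℝ)
    (η : ℝ) (hη : 0 ≤ η)
    (F : (Fin n → Fin n → ℝ) → EReal)
    (hconv : ∀ π₁ π₂ : Fin n → Fin n → ℝ, ∀ a b : ℝ, 0 ≤ a → 0 ≤ b → a + b = 1 →
      F (a • π₁ + b • π₂) ≤ (a : EReal) * F π₁ + (b : EReal) * F π₂)
    (hlsc : LowerSemicontinuous F)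
    (hfin : ∃ π₀ : DCouplings μ ν, F π₀.1 < ⊤) :
    (⨆ c : Fin n → Fin n → ℝ, ((sinkhorn η c μ ν : ℝ) : EReal) - dconj F c)
      = ⨅ π : DCouplings μ ν, (F π.1 + ((η * negEntropy π.1 : ℝ) : EReal)) := by
  obtain ⟨⟨π₀, hπ₀⟩, hFπ₀⟩ := hfin
  refine le_antisymm (iSup_le fun c => le_iInf fun π => sinkhorn_sub_dconj_le c F π.2) ?_
  refine EReal.ge_of_forall_gt_iff_ge.1 fun m hm => ?_
  have hg : ConvexOn ℝ (DCouplings μ ν) fun π => η * negEntropy π :=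
    (convexOn_negEntropy.subset (fun _ hπ => hπ.1) (convex_dCouplings μ ν)).smul hη
  obtain ⟨ℓ, s, hK, hF⟩ := exists_affine_sandwich_of_lt_add hconv hlsc
    (isCompact_dCouplings μ ν) hg (continuous_const.mul continuous_negEntropy).continuousOn
    hπ₀ hFπ₀.ne fun π hπ => hm.trans_le (iInf_le _ (⟨π, hπ⟩ : DCouplings μ ν))
  obtain ⟨c, hc⟩ := exists_frob_eq ℓ.toLinearMap
  calc (m : EReal) = ((m + s : ℝ) : EReal) - s := by norm_cast; ring
    _ ≤ sinkhorn η c μ ν - dconj F c :=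
      EReal.sub_le_sub (mod_cast le_sinkhorn ⟨π₀, hπ₀⟩ fun π hπ => hc π ▸ hK π hπ)
        (dconj_le fun π => hc π ▸ hF π)
    _ ≤ _ := le_iSup (fun c => ((sinkhorn η c μ ν : ℝ) : EReal) - dconj F c) c

/-- (Entropic smoothing of the adversarial problem adds entropic
regularization to the primal.)
`sup_c S^η_c(μ,ν) − F*(c) = min_{π∈Π(μ,ν)} F(π) + η Σ_{ij} π_{ij}(log π_{ij} − 1)`. -/
theorem stmt19 {n : ℕ} (μ ν : Fin n → ℝ) (hμ : IsHistogram μ) (hν : IsHistogram ν)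
    (hμpos : ∀ i, 0 < μ i) (hνpos : ∀ j, 0 < ν j)
    (η : ℝ) (hη : 0 ≤ η)
    (F : (Fin n → Fin n → ℝ) → EReal)
    (hbot : ∀ π, F π ≠ ⊥)
    (hproper : ∃ π, F π ≠ ⊤)
    (hconv : ∀ π₁ π₂ : Fin n → Fin n → ℝ, ∀ a b : ℝ, 0 ≤ a → 0 ≤ b → a + b = 1 →
      F (a • π₁ + b • π₂) ≤ (a : EReal) * F π₁ + (b : EReal) * F π₂)
    (hlsc : LowerSemicontinuous F)
    (hfin : ∃ π₀ : DCouplings μ ν, F π₀.1 < ⊤) :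
    (⨆ c : Fin n → Fin n → ℝ, ((sinkhorn η c μ ν : ℝ) : EReal) - dconj F c)
      = ⨅ π : DCouplings μ ν, (F π.1 + ((η * negEntropy π.1 : ℝ) : EReal)) :=
  stmt19_general μ ν η hη F hconv hlsc hfin
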